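/- arXiv:1711.03996 — 3 statements merged into one kernel-verified Lean document; each statement's English description precedes it below -/
import Mathlib

section
/- Quality parameters of the two-dimensional uniform linear array: Fix R > 0 and an integer P ≥ 1, and consider the antenna placement Δ_{(k,j)} = (Rk/P, Rj/P) for k, j ∈ {0,…,P−1}, with difference set Q = {(Rq₁/P, Rq₂/P) : q₁, q₂ ∈ {−(P−1),…,P−1}}. Set R₀ = R·(2P−1)/(2P). Then the collection of squares I_q = {(R/P)·(q + y) : y ∈ [−1/2, 1/2]²}, indexed by q ∈ {−(P−1),…,P−1}², is a covering associated to Q which has the centroid property and the R₀-covering property, and its quality parameters satisfy β(R₀) ≤ R²/P and γ(R₀) ≤ 8·R⁴/P². -/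
open MeasureTheory Real Complex Function Set Classical

noncomputable section

/-- The plane `ℝ²` with the Euclidean metric. -/
abbrev E2 := EuclideanSpace ℝ (Fin 2)

/-- The circle `𝕋 = ℝ/2πℤ`. -/
abbrev T2 := AddCircle (2 * Real.pi)

instance : Fact (0 < 2 * Real.pi) := ⟨by positivity⟩

/-- Cosine as a function on the circle. -/
def cosC : T2 → ℝ := Real.cos_periodic.lift

/-- Sine as a function on the circle. -/
def sinC : T2 → ℝ := Real.sin_periodic.lift

/-- The plane wave `θ ↦ exp(i ⟨v, (cos θ, sin θ)⟩)`. -/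
def planeWave (v : E2) (θ : T2) : ℂ :=
  Complex.exp (Complex.I * ((v 0 * cosC θ + v 1 * sinC θ : ℝ) : ℂ))

/-- A covering associated to a finite family of points `q`. -/
def IsCovering {ι : Type*} [Fintype ι] (q : ι → E2) (I : ι → Set E2) : Prop :=
  (∀ j, MeasurableSet (I j)) ∧ (∀ i j, i ≠ j → volume (I i ∩ I j) = 0) ∧ (∀ j, q j ∈ I j)

/-- The `R`-covering property. -/
def RCovers {ι : Type*} [Fintype ι] (R : ℝ) (I : ι → Set E2) : Prop :=
  Metric.closedBall (0 : E2) R ⊆ ⋃ j, I j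

/-- The centroid property. -/
def CentroidProp {ι : Type*} [Fintype ι] (q : ι → E2) (I : ι → Set E2) : Prop :=
  ∀ j, 0 < volume (I j) → (volume (I j)).toReal⁻¹ • (∫ x in I j, x) = q j

/-- The quality parameter `β(R)`. -/
def betaP {ι : Type*} [Fintype ι] (R : ℝ) (I : ι → Set E2) : ℝ :=
  R * Real.sqrt (⨆ j, (volume (I j ∩ Metric.closedBall 0 R)).toReal)

/-- The quality parameter `γ(R)`. -/
def gammaP {ι : Type*} [Fintype ι] (R : ℝ) (I : ι → Set E2) : ℝ :=
  ∑ j, (Metric.diam (I j ∩ Metric.closedBall 0 R)) ^ 2 *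
    (volume (I j ∩ Metric.closedBall 0 R)).toReal

/-- A finite complex Borel measure, represented by a finite nonnegative base measure
together with an integrable complex density. -/
structure CMeas (X : Type*) [MeasurableSpace X] where
  base : Measure X
  finite : IsFiniteMeasure base
  dens : X → ℂ
  integrable : Integrable dens base

namespace CMeas

variable {X : Type*} [MeasurableSpace X]

/-- Integration of a function against a complex measure. -/
def integr (μ : CMeas X) (g : X → ℂ) : ℂ := ∫ x, g x * μ.dens x ∂μ.base

/-- The value of the complex measure on a set. -/
def val (μ : CMeas X) (s : Set X) : ℂ := ∫ x in s, μ.dens x ∂μ.base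

/-- The total variation norm of a complex measure. -/
def tv (μ : CMeas X) : ℝ := ∫ x, ‖μ.dens x‖ ∂μ.base

/-- The support of (the total variation measure of) a complex measure. -/
def supp [TopologicalSpace X] (μ : CMeas X) : Set X :=
  {x | ∀ U : Set X, IsOpen U → x ∈ U → (∫ y in U, ‖μ.dens y‖ ∂μ.base) ≠ 0}

end CMeas

/-- The covariance measurement operator associated to antenna positions `Δ`. -/
def Mop {m : ℕ} (Δ : Fin m → E2) (μ : CMeas T2) : Matrix (Fin m) (Fin m) ℂ :=
  fun k l => μ.integr (planeWave (Δ k - Δ l))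

/-- The autocorrelation function of a filter on the circle. -/
def autocorr (φ : T2 → ℂ) (θ : T2) : ℂ :=
  ∫ ω : T2, φ ω * (starRingEnd ℂ) (φ (ω - θ))

/-- The Frobenius norm of a complex matrix. -/
def frob {m : ℕ} (A : Matrix (Fin m) (Fin m) ℂ) : ℝ :=
  Real.sqrt (∑ k, ∑ l, ‖A k l‖ ^ 2)

/-- A point of the plane from its two coordinates. -/
def e2 (x y : ℝ) : E2 := WithLp.toLp 2 ![x, y]

/-!
Each cell `I_q` is the closed axis-parallel square of side `s = R/P` centred at `q`, and the
centres form a lattice of spacing `s`. Hence the cells tile the square `[-R₀, R₀]²`, which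
contains `B_{R₀}(0)`; two distinct cells meet inside a line `x k = const`, a null set; a cell
is symmetric about its centre, which is therefore its centroid; and a cell has area `s²` and
diameter `√2 s`. With `R₀ ≤ R` and at most `4P²` cells this gives `β ≤ R s` and
`γ ≤ 4P² · 2 s² · s²`.
-/

lemma one_le_abs_natCast_sub_natCast {a b : ℕ} (h : a ≠ b) : 1 ≤ |(a : ℝ) - b| := by
  exact_mod_cast Int.one_le_abs (sub_ne_zero.2 (Int.natCast_inj.not.2 h))

lemma exists_lt_mem_Icc_add_one {m : ℕ} (hm : m ≠ 0) {u : ℝ} (hu : u ∈ Icc 0 (m : ℝ)) :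
    ∃ i < m, u ∈ Icc (i : ℝ) (i + 1) := by
  obtain ⟨hu0, hum⟩ := hu
  rcases lt_or_ge ⌊u⌋₊ m with h | h
  · exact ⟨⌊u⌋₊, h, Nat.floor_le hu0, (Nat.lt_floor_add_one u).le⟩
  · have : (m : ℝ) ≤ u := (Nat.cast_le.2 h).trans (Nat.floor_le hu0)
    refine ⟨m - 1, by omega, ?_, ?_⟩ <;> push_cast [Nat.one_le_iff_ne_zero.2 hm] <;> linarith

lemma exists_fin_sub_eq_iff (P : ℕ) (t : ℝ) :
    (∃ a b : Fin P, t = (a : ℕ) - (b : ℕ)) ↔ ∃ i : Fin (2 * P - 1), t = (i : ℕ) - ((P : ℝ) - 1) := by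
  constructor
  · rintro ⟨a, b, rfl⟩
    have h : (a : ℕ) + P = (a + (P - 1) - b : ℕ) + b + 1 := by omega
    refine ⟨⟨a + (P - 1) - b, by omega⟩, ?_⟩
    have : (a : ℝ) + P = ((a + (P - 1) - b : ℕ) : ℝ) + b + 1 := by exact_mod_cast h
    simp only
    linarith
  · rintro ⟨i, rfl⟩
    have h : (i - (P - 1) : ℕ) + P = i + ((P - 1) - i : ℕ) + 1 := by omega
    refine ⟨⟨i - (P - 1), by omega⟩, ⟨(P - 1) - i, by omega⟩, ?_⟩
    have : ((i - (P - 1) : ℕ) : ℝ) + P = i + ((P - 1 - i : ℕ) : ℝ) + 1 := by exact_mod_cast h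
    simp only
    linarith

lemma exists_fin_abs_sub_le {P : ℕ} (hP : 1 ≤ P) {s t : ℝ} (hs : 0 < s)
    (ht : |t| ≤ s * (2 * P - 1) / 2) :
    ∃ i : Fin (2 * P - 1), |t - s * ((i : ℕ) - ((P : ℝ) - 1))| ≤ s / 2 := by
  have hm : ((2 * P - 1 : ℕ) : ℝ) = 2 * P - 1 := by
    rw [Nat.cast_sub (by omega)]
    push_cast
    ring
  obtain ⟨u, rfl⟩ : ∃ u, t = s * u := ⟨t / s, by field_simp⟩
  rw [abs_mul, abs_of_pos hs, mul_div_assoc] at ht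
  have hu := abs_le.1 (le_of_mul_le_mul_left ht hs)
  obtain ⟨i, hi, hi0, hi1⟩ := exists_lt_mem_Icc_add_one (m := 2 * P - 1) (by omega)
    (u := u + (P - 1 / 2)) ⟨by linarith, by rw [hm]; linarith⟩
  refine ⟨⟨i, hi⟩, ?_⟩
  rw [← mul_sub, abs_mul, abs_of_pos hs, div_eq_mul_one_div]
  gcongr
  exact abs_le.2 ⟨by simp only; linarith, by simp only; linarith⟩

lemma setIntegral_id_eq_zero_of_neg_eq {E : Type*} [NormedAddCommGroup E] [NormedSpace ℝ E]
    [MeasurableSpace E] [BorelSpace E] (μ : Measure E) [μ.IsNegInvariant] {S : Set E}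
    (hS : -S = S) : ∫ x in S, x ∂μ = 0 := by
  have h := (Measure.measurePreserving_neg μ).setIntegral_preimage_emb
    (Homeomorph.neg E).measurableEmbedding id S
  rw [Set.neg_preimage, hS] at h
  simp only [id_eq] at h
  rw [integral_neg] at h
  linear_combination (norm := module) (-(1 / 2) : ℝ) • h

section Cube

variable {ι : Type*}

def cube (c : EuclideanSpace ℝ ι) (s : ℝ) : Set (EuclideanSpace ℝ ι) :=
  {x | ∀ k, |x k - c k| ≤ s / 2}

lemma cube_eq_preimage_closedBall [Fintype ι] (c : EuclideanSpace ℝ ι) {s : ℝ} (hs : 0 ≤ s) :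
    cube c s = WithLp.ofLp ⁻¹' Metric.closedBall (WithLp.ofLp c) (s / 2) := by
  ext x
  simp [cube, dist_pi_le_iff (by positivity : 0 ≤ s / 2), Real.dist_eq]

lemma isCompact_cube [Fintype ι] (c : EuclideanSpace ℝ ι) {s : ℝ} (hs : 0 ≤ s) :
    IsCompact (cube c s) := by
  rw [cube_eq_preimage_closedBall c hs]
  exact (PiLp.continuousLinearEquiv 2 ℝ (fun _ : ι => ℝ)).toHomeomorph.isCompact_preimage.2
    (isCompact_closedBall (WithLp.ofLp c) _)

lemma volume_cube [Fintype ι] (c : EuclideanSpace ℝ ι) {s : ℝ} (hs : 0 ≤ s) :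
    volume (cube c s) = ENNReal.ofReal (s ^ Fintype.card ι) := by
  rw [cube_eq_preimage_closedBall c hs, (PiLp.volume_preserving_ofLp ι).measure_preimage
    measurableSet_closedBall.nullMeasurableSet, Real.volume_pi_closedBall _ (by positivity),
    mul_div_cancel₀ s two_ne_zero]

lemma measureReal_cube_inter_le [Fintype ι] (c : EuclideanSpace ℝ ι) {s : ℝ} (hs : 0 ≤ s)
    (t : Set (EuclideanSpace ℝ ι)) : (volume (cube c s ∩ t)).toReal ≤ s ^ Fintype.card ι := by
  calc (volume (cube c s ∩ t)).toReal ≤ (volume (cube c s)).toReal :=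
        ENNReal.toReal_mono (by simp [volume_cube c hs]) (measure_mono inter_subset_left)
    _ = s ^ Fintype.card ι := by rw [volume_cube c hs, ENNReal.toReal_ofReal (by positivity)]

lemma diam_le_of_subset_cube [Fintype ι] {t : Set (EuclideanSpace ℝ ι)}
    {c : EuclideanSpace ℝ ι} {s : ℝ} (hs : 0 ≤ s) (ht : t ⊆ cube c s) :
    Metric.diam t ≤ √(Fintype.card ι) * s := by
  refine Metric.diam_le_of_forall_dist_le (by positivity) fun x hx y hy => ?_
  rw [EuclideanSpace.dist_eq, ← Real.sqrt_sq hs, ← Real.sqrt_mul (Nat.cast_nonneg _)]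
  refine Real.sqrt_le_sqrt ?_
  calc ∑ k, dist (x k) (y k) ^ 2 ≤ ∑ _k : ι, s ^ 2 := by
        refine Finset.sum_le_sum fun k _ => pow_le_pow_left₀ dist_nonneg ?_ 2
        rw [Real.dist_eq, abs_le]
        constructor <;> linarith [abs_le.1 (ht hx k), abs_le.1 (ht hy k)]
    _ = Fintype.card ι * s ^ 2 := by simp

lemma neg_cube_zero (s : ℝ) : -cube (0 : EuclideanSpace ℝ ι) s = cube 0 s := by
  ext x
  simp [cube, abs_neg]

lemma preimage_add_left_cube (c : EuclideanSpace ℝ ι) (s : ℝ) :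
    (c + ·) ⁻¹' cube c s = cube 0 s := by
  ext x
  simp [cube]

lemma setIntegral_cube_id [Fintype ι] (c : EuclideanSpace ℝ ι) {s : ℝ} (hs : 0 ≤ s) :
    ∫ x in cube c s, x = (s ^ Fintype.card ι) • c := by
  have h := (measurePreserving_add_left volume c).setIntegral_preimage_emb
    (measurableEmbedding_addLeft c) id (cube c s)
  simp only [preimage_add_left_cube, id] at h
  rw [← h, integral_add, setIntegral_id_eq_zero_of_neg_eq volume (neg_cube_zero s), add_zero,
    setIntegral_const, measureReal_def, volume_cube 0 hs, ENNReal.toReal_ofReal (by positivity)]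
  · exact integrableOn_const (by simp [volume_cube 0 hs])
  · exact continuous_id.continuousOn.integrableOn_compact (isCompact_cube 0 hs)

lemma centroid_cube [Fintype ι] (c : EuclideanSpace ℝ ι) {s : ℝ} (hs : 0 < s) :
    (volume (cube c s)).toReal⁻¹ • ∫ x in cube c s, x = c := by
  rw [setIntegral_cube_id c hs.le, volume_cube c hs.le, ENNReal.toReal_ofReal (by positivity),
    inv_smul_smul₀ (by positivity)]

-- Both cubes force `x k` to the midpoint of `c k` and `c' k`: the intersection lies in a hyperplane.
lemma volume_cube_inter_cube_eq_zero [Fintype ι] {c c' : EuclideanSpace ℝ ι} {s : ℝ} (k : ι)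
    (h : s ≤ |c k - c' k|) : volume (cube c s ∩ cube c' s) = 0 := by
  refine measure_mono_null (t := WithLp.ofLp ⁻¹' {y | y k = (c k + c' k) / 2}) ?_ ?_
  · rintro x ⟨hx, hx'⟩
    have := abs_le.1 (hx k)
    have := abs_le.1 (hx' k)
    show x k = _
    rcases abs_cases (c k - c' k) with ⟨hck, -⟩ | ⟨hck, -⟩ <;> linarith
  · rw [(PiLp.volume_preserving_ofLp ι).measure_preimage
      (measurableSet_eq_fun (measurable_pi_apply k) measurable_const).nullMeasurableSet]
    exact Measure.pi_hyperplane _ k _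

lemma image_affine_cube (c : EuclideanSpace ℝ ι) {s : ℝ} (hs : 0 < s) :
    (fun y => c + s • y) '' cube 0 1 = cube c s := by
  ext x
  constructor
  · rintro ⟨y, hy, rfl⟩ k
    have := hy k
    simp only [PiLp.zero_apply, sub_zero, one_div] at this
    simp only [PiLp.add_apply, PiLp.smul_apply, smul_eq_mul, add_sub_cancel_left, abs_mul,
      abs_of_pos hs]
    nlinarith
  · intro hx
    refine ⟨s⁻¹ • (x - c), fun k => ?_, by simp [smul_smul, hs.ne']⟩
    have := hx k
    simp only [PiLp.smul_apply, PiLp.sub_apply, PiLp.zero_apply, smul_eq_mul, sub_zero, abs_mul,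
      abs_inv, abs_of_pos hs]
    rw [inv_mul_le_iff₀ hs]
    linarith

end Cube

section CubeCovering

variable {ι : Type*} [Fintype ι] (c : ι → E2) {s : ℝ}

lemma isCovering_cube (hs : 0 ≤ s) (hsep : ∀ i j, i ≠ j → ∃ k, s ≤ |c i k - c j k|) :
    IsCovering c (fun i => cube (c i) s) := by
  refine ⟨fun i => (isCompact_cube _ hs).isClosed.measurableSet, fun i j hij => ?_, fun i k => ?_⟩
  · obtain ⟨k, hk⟩ := hsep i j hij
    exact volume_cube_inter_cube_eq_zero k hk
  · rw [sub_self, abs_zero]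
    positivity

lemma centroidProp_cube (hs : 0 < s) : CentroidProp c (fun i => cube (c i) s) :=
  fun i _ => centroid_cube (c i) hs

lemma betaP_cube_le {R : ℝ} (hR : 0 ≤ R) (hs : 0 ≤ s) :
    betaP R (fun i => cube (c i) s) ≤ R * s := by
  refine mul_le_mul_of_nonneg_left ?_ hR
  refine (Real.sqrt_le_sqrt (Real.iSup_le (fun i => ?_) (by positivity))).trans_eq
    (Real.sqrt_sq hs)
  simpa using measureReal_cube_inter_le (c i) hs (Metric.closedBall 0 R)

lemma gammaP_cube_le (R : ℝ) (hs : 0 ≤ s) :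
    gammaP R (fun i => cube (c i) s) ≤ Fintype.card ι * (2 * s ^ 4) := by
  have hterm : ∀ i, Metric.diam (cube (c i) s ∩ Metric.closedBall 0 R) ^ 2 *
      (volume (cube (c i) s ∩ Metric.closedBall 0 R)).toReal ≤ 2 * s ^ 4 := by
    intro i
    have hdiam := diam_le_of_subset_cube hs (inter_subset_left (s := cube (c i) s)
      (t := Metric.closedBall 0 R))
    have hvol := measureReal_cube_inter_le (c i) hs (Metric.closedBall 0 R)
    simp only [Fintype.card_fin, Nat.cast_ofNat] at hdiam hvol
    calc _ ≤ (√2 * s) ^ 2 * s ^ 2 := by gcongr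
      _ = 2 * s ^ 4 := by rw [mul_pow, Real.sq_sqrt zero_le_two]; ring
  have := Finset.sum_le_card_nsmul Finset.univ _ _ fun i _ => hterm i
  rwa [Finset.card_univ, nsmul_eq_mul] at this

end CubeCovering

lemma unitSquare_eq_cube :
    {y : E2 | y 0 ∈ Icc (-(1 / 2) : ℝ) (1 / 2) ∧ y 1 ∈ Icc (-(1 / 2) : ℝ) (1 / 2)} = cube 0 1 := by
  ext y
  simp [cube, Fin.forall_fin_two, abs_le]

lemma smul_e2_sub_smul_e2 (s a b a' b' : ℝ) :
    s • e2 a b - s • e2 a' b' = s • e2 (a - a') (b - b') := by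
  ext k
  fin_cases k <;> simp [e2, mul_sub]

def ulaCenter (P : ℕ) (s : ℝ) (i : Fin (2 * P - 1) × Fin (2 * P - 1)) : E2 :=
  s • e2 (((i.1 : ℕ) : ℝ) - ((P : ℝ) - 1)) (((i.2 : ℕ) : ℝ) - ((P : ℝ) - 1))

@[simp]
lemma ulaCenter_apply_zero (P : ℕ) (s : ℝ) (i : Fin (2 * P - 1) × Fin (2 * P - 1)) :
    ulaCenter P s i 0 = s * ((i.1 : ℕ) - ((P : ℝ) - 1)) := rfl

@[simp]
lemma ulaCenter_apply_one (P : ℕ) (s : ℝ) (i : Fin (2 * P - 1) × Fin (2 * P - 1)) :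
    ulaCenter P s i 1 = s * ((i.2 : ℕ) - ((P : ℝ) - 1)) := rfl

lemma setOf_sub_eq_range_ulaCenter (P : ℕ) (s : ℝ) :
    {x : E2 | ∃ kj kj' : Fin P × Fin P,
      x = s • e2 (kj.1 : ℕ) (kj.2 : ℕ) - s • e2 (kj'.1 : ℕ) (kj'.2 : ℕ)} =
      range (ulaCenter P s) := by
  ext x
  simp only [mem_ofPred_eq, mem_range, smul_e2_sub_smul_e2]
  constructor
  · rintro ⟨⟨a, b⟩, ⟨a', b'⟩, rfl⟩
    obtain ⟨i, hi⟩ := (exists_fin_sub_eq_iff P _).1 ⟨a, a', rfl⟩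
    obtain ⟨j, hj⟩ := (exists_fin_sub_eq_iff P _).1 ⟨b, b', rfl⟩
    exact ⟨(i, j), by rw [ulaCenter, ← hi, ← hj]⟩
  · rintro ⟨⟨i, j⟩, rfl⟩
    obtain ⟨a, a', ha⟩ := (exists_fin_sub_eq_iff P _).2 ⟨i, rfl⟩
    obtain ⟨b, b', hb⟩ := (exists_fin_sub_eq_iff P _).2 ⟨j, rfl⟩
    exact ⟨(a, b), (a', b'), by rw [ulaCenter, ha, hb]⟩

lemma ulaCenter_separated (P : ℕ) {s : ℝ} (hs : 0 ≤ s) (i j : Fin (2 * P - 1) × Fin (2 * P - 1))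
    (hij : i ≠ j) : ∃ k, s ≤ |ulaCenter P s i k - ulaCenter P s j k| := by
  have key : ∀ a b : Fin (2 * P - 1), a ≠ b →
      s ≤ |s * ((a : ℕ) - ((P : ℝ) - 1)) - s * ((b : ℕ) - ((P : ℝ) - 1))| := by
    intro a b hab
    rw [← mul_sub, sub_sub_sub_cancel_right, abs_mul, abs_of_nonneg hs]
    exact le_mul_of_one_le_right hs (one_le_abs_natCast_sub_natCast (Fin.val_ne_of_ne hab))
  by_cases h : i.1 = j.1
  · exact ⟨1, by simpa using key i.2 j.2 fun h' => hij (Prod.ext h h')⟩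
  · exact ⟨0, by simpa using key i.1 j.1 h⟩

lemma rCovers_ulaCenter {P : ℕ} (hP : 1 ≤ P) {s : ℝ} (hs : 0 < s) :
    RCovers (s * (2 * P - 1) / 2) (fun i => cube (ulaCenter P s i) s) := by
  intro x hx
  rw [Metric.mem_closedBall, dist_zero_right] at hx
  obtain ⟨i, hi⟩ := exists_fin_abs_sub_le hP hs ((PiLp.norm_apply_le x 0).trans hx)
  obtain ⟨j, hj⟩ := exists_fin_abs_sub_le hP hs ((PiLp.norm_apply_le x 1).trans hx)
  exact mem_iUnion.2 ⟨(i, j), Fin.forall_fin_two.2 ⟨by simpa using hi, by simpa using hj⟩⟩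

/-- **Quality parameters of the two-dimensional uniform linear array.** -/
theorem two_dim_ula_quality
    (R : ℝ) (hR : 0 < R) (P : ℕ) (hP : 1 ≤ P)
    (Δ : Fin P × Fin P → E2)
    (hΔ : ∀ kj : Fin P × Fin P, Δ kj = (R / P) • e2 (kj.1 : ℕ) (kj.2 : ℕ))
    (q : Fin (2 * P - 1) × Fin (2 * P - 1) → E2)
    (hq : ∀ i, q i = (R / P) • e2 (((i.1 : ℕ) : ℝ) - ((P : ℝ) - 1))
        (((i.2 : ℕ) : ℝ) - ((P : ℝ) - 1)))
    (I : Fin (2 * P - 1) × Fin (2 * P - 1) → Set E2)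
    (hI : ∀ i, I i = (fun y : E2 => q i + (R / P) • y) ''
        {y : E2 | y 0 ∈ Set.Icc (-(1 / 2) : ℝ) (1 / 2) ∧ y 1 ∈ Set.Icc (-(1 / 2) : ℝ) (1 / 2)})
    (R₀ : ℝ) (hR₀ : R₀ = R * (2 * (P : ℝ) - 1) / (2 * P)) :
    {x : E2 | ∃ kj kj' : Fin P × Fin P, x = Δ kj - Δ kj'} = Set.range q ∧
    IsCovering q I ∧ CentroidProp q I ∧ RCovers R₀ I ∧
    betaP R₀ I ≤ R ^ 2 / P ∧ gammaP R₀ I ≤ 8 * R ^ 4 / P ^ 2 := by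
  have hP' : (1 : ℝ) ≤ P := by exact_mod_cast hP
  have hs : 0 < R / P := by positivity
  obtain rfl : Δ = fun kj => (R / P) • e2 (kj.1 : ℕ) (kj.2 : ℕ) := funext hΔ
  obtain rfl : q = ulaCenter P (R / P) := funext hq
  obtain rfl : I = fun i => cube (ulaCenter P (R / P) i) (R / P) := funext fun i => by
    rw [hI, unitSquare_eq_cube, image_affine_cube _ hs]
  obtain rfl : R₀ = R / P * (2 * P - 1) / 2 := by rw [hR₀]; field_simp
  refine ⟨setOf_sub_eq_range_ulaCenter P _, isCovering_cube _ hs.le (ulaCenter_separated P hs.le),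
    centroidProp_cube _ hs, rCovers_ulaCenter hP hs, ?_, ?_⟩
  · calc _ ≤ R / P * (2 * P - 1) / 2 * (R / P) := betaP_cube_le _ (by nlinarith) hs.le
      _ ≤ R * (R / P) := by gcongr; field_simp; linarith
      _ = R ^ 2 / P := by ring
  · calc _ ≤ _ := gammaP_cube_le _ _ hs.le
      _ ≤ (2 * (P : ℝ)) ^ 2 * (2 * (R / P) ^ 4) := by
        gcongr
        rw [Fintype.card_prod, Fintype.card_fin, ← sq]
        exact_mod_cast Nat.pow_le_pow_left (Nat.sub_le (2 * P) 1) 2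
      _ = 8 * R ^ 4 / P ^ 2 := by field_simp; ring

end
end

section
/- Key scalar inequality for the radius map: Define s : [0,1] → ℝ by s(θ) = θ·((1 − θ) + √((1 − θ)² + 4θ(1 − θ))). Then for every ρ ∈ [0, 1/3], s(2/3 + ρ) ≤ 8/9 − 3ρ². -/
/-!
At `θ = 2/3 + ρ` the radicand is `1 - 2ρ - 3ρ²` and `θ(1 - θ) = 2/9 - ρ/3 - ρ²`, so it suffices
that `θ √(1 - 2ρ - 3ρ²) ≤ 2/3 + ρ/3 - 2ρ²`. Both sides are nonnegative, and after squaring the gap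
is `ρ² (4/9 + 14ρ/3 + 7ρ²) ≥ 0`.
-/

lemma mul_sqrt_le_of_sq_mul_le {a x b : ℝ} (ha : 0 ≤ a) (hb : 0 ≤ b) (h : a ^ 2 * x ≤ b ^ 2) :
    a * √x ≤ b :=
  calc a * √x = √(a ^ 2 * x) := by rw [Real.sqrt_mul (sq_nonneg a), Real.sqrt_sq ha]
    _ ≤ √(b ^ 2) := Real.sqrt_le_sqrt h
    _ = b := Real.sqrt_sq hb

lemma two_thirds_add_mul_sqrt_le {ρ : ℝ} (h0 : 0 ≤ ρ) (h1 : ρ ≤ 1 / 3) :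
    (2 / 3 + ρ) * √(1 - 2 * ρ - 3 * ρ ^ 2) ≤ 2 / 3 + ρ / 3 - 2 * ρ ^ 2 := by
  have gap : (2 / 3 + ρ / 3 - 2 * ρ ^ 2) ^ 2 - (2 / 3 + ρ) ^ 2 * (1 - 2 * ρ - 3 * ρ ^ 2)
      = ρ ^ 2 * (4 / 9 + 14 * ρ / 3 + 7 * ρ ^ 2) := by ring
  refine mul_sqrt_le_of_sq_mul_le (by linarith) (by nlinarith) ?_
  linarith [gap, show 0 ≤ ρ ^ 2 * (4 / 9 + 14 * ρ / 3 + 7 * ρ ^ 2) by positivity]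

/-- **Key scalar inequality for the radius map.** -/
theorem radius_map_key_inequality
    (s : ℝ → ℝ)
    (hs : ∀ θ : ℝ, s θ = θ * ((1 - θ) + Real.sqrt ((1 - θ) ^ 2 + 4 * θ * (1 - θ)))) :
    ∀ ρ : ℝ, ρ ∈ Set.Icc (0 : ℝ) (1 / 3) → s (2 / 3 + ρ) ≤ 8 / 9 - 3 * ρ ^ 2 := by
  rintro ρ ⟨h0, h1⟩
  have radicand : (1 - (2 / 3 + ρ)) ^ 2 + 4 * (2 / 3 + ρ) * (1 - (2 / 3 + ρ))
      = 1 - 2 * ρ - 3 * ρ ^ 2 := by ring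
  rw [hs, radicand, mul_add]
  linarith [two_thirds_add_mul_sqrt_le h0 h1]
end

section
/- Tail bound for the arcsine Taylor series: For every x ∈ [−1, 1] and every M ∈ ℕ, |arcsin(x) − Σ_{n=0}^{M} (1/4^n)·binom(2n, n)·x^{2n+1}/(2n+1)| ≤ (π/2)·|x|^{2M+3}. -/
open Real Finset

/-! Let `c n = C(2n, n) / 4 ^ n`, `P_M u = ∑_{n ≤ M} c n u ^ n` (a truncation of the series of
`(1 - u) ^ (-1 / 2)`) and `G u = √(1 - u) * P_M u`. The recurrence `(n + 1) c (n + 1) = (n + 1/2) c n`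
gives `G' u = -(M + 1) c (M + 1) u ^ M / √(1 - u)`, from which `1 - u ^ (M + 1) ≤ G u ≤ 1` on `[0, 1]`.
The remainder `R = arcsin - S_M` has `R' t = (1 - G (t ^ 2)) / √(1 - t ^ 2)`, so on `[0, 1)`
`0 ≤ R' t ≤ t ^ (2M + 2) / √(1 - t ^ 2) ≤ (t ^ (2M + 2) * arcsin t)'`. Hence
`0 ≤ R x ≤ x ^ (2M + 2) * arcsin x ≤ π / 2 * x ^ (2M + 3)` by Jordan's inequality, and `R` is odd. -/

-- `(1 - u) ^ (-1 / 2) = ∑ n, invSqrtCoeff n * u ^ n`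
noncomputable def invSqrtCoeff (n : ℕ) : ℝ := n.centralBinom / 4 ^ n

lemma succ_mul_invSqrtCoeff_succ (n : ℕ) :
    ((n : ℝ) + 1) * invSqrtCoeff (n + 1) = (n + 1 / 2) * invSqrtCoeff n := by
  have h : ((n : ℝ) + 1) * (n + 1).centralBinom = 2 * (2 * n + 1) * n.centralBinom := by
    exact_mod_cast n.succ_mul_centralBinom_succ
  simp only [invSqrtCoeff, pow_succ, mul_div_assoc', h]
  field_simp
  ring

lemma invSqrtCoeff_pos (n : ℕ) : 0 < invSqrtCoeff n := by
  have := n.centralBinom_pos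
  unfold invSqrtCoeff
  positivity

lemma invSqrtCoeff_le_one (n : ℕ) : invSqrtCoeff n ≤ 1 := by
  rw [invSqrtCoeff, div_le_one (by positivity)]
  exact_mod_cast n.centralBinom_le_four_pow

noncomputable def invSqrtTaylor (M : ℕ) (u : ℝ) : ℝ := ∑ n ∈ range (M + 1), invSqrtCoeff n * u ^ n

lemma hasDerivAt_sqrt_one_sub_mul_invSqrtTaylor (M : ℕ) {u : ℝ} (hu : u < 1) :
    HasDerivAt (fun u ↦ √(1 - u) * invSqrtTaylor M u)
      (-((M + 1) * invSqrtCoeff (M + 1) * u ^ M) / √(1 - u)) u := by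
  have hs : √(1 - u) ≠ 0 := (sqrt_pos.2 (by linarith)).ne'
  have hsq : √(1 - u) ^ 2 = 1 - u := sq_sqrt (by linarith)
  have hsqrt : HasDerivAt (fun u ↦ √(1 - u)) (-1 / (2 * √(1 - u))) u := by
    simpa using ((hasDerivAt_id u).const_sub 1).sqrt (by simp; linarith)
  induction M with
  | zero =>
    refine hsqrt.congr_deriv ?_ |>.congr_of_eventuallyEq ?_
    · norm_num [invSqrtCoeff, Nat.centralBinom_eq_two_mul_choose]
      ring
    · simp [invSqrtTaylor, invSqrtCoeff]
  | succ M ih =>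
    have hsplit : (fun v ↦ √(1 - v) * invSqrtTaylor (M + 1) v) =
        fun v ↦ √(1 - v) * invSqrtTaylor M v + invSqrtCoeff (M + 1) * (√(1 - v) * v ^ (M + 1)) := by
      ext v
      simp only [invSqrtTaylor, sum_range_succ _ (M + 1)]
      ring
    rw [hsplit]
    refine (ih.fun_add ((hsqrt.fun_mul (hasDerivAt_pow (M + 1) u)).const_mul _)).congr_deriv ?_
    have h := succ_mul_invSqrtCoeff_succ (M + 1)
    push_cast at h ⊢
    field_simp
    linear_combination 2 * u ^ (M + 1) * h + 2 * invSqrtCoeff (M + 1) * u ^ M * (M + 1) * hsq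

lemma invSqrtTaylor_zero_right (M : ℕ) : invSqrtTaylor M 0 = 1 := by
  simp [invSqrtTaylor, sum_range_succ', invSqrtCoeff]

lemma continuous_sqrt_one_sub_mul_invSqrtTaylor (M : ℕ) :
    Continuous fun u ↦ √(1 - u) * invSqrtTaylor M u := by
  unfold invSqrtTaylor
  fun_prop

lemma sqrt_one_sub_mul_invSqrtTaylor_le_one (M : ℕ) {u : ℝ} (hu : u ∈ Set.Icc 0 1) :
    √(1 - u) * invSqrtTaylor M u ≤ 1 := by
  refine image_le_of_deriv_right_le_deriv_boundary
    (continuous_sqrt_one_sub_mul_invSqrtTaylor M).continuousOn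
    (fun v hv ↦ (hasDerivAt_sqrt_one_sub_mul_invSqrtTaylor M hv.2).hasDerivWithinAt)
    (by simp [invSqrtTaylor_zero_right]) continuousOn_const
    (fun v _ ↦ (hasDerivAt_const v (1 : ℝ)).hasDerivWithinAt) (fun v hv ↦ ?_) hu
  have hc := invSqrtCoeff_pos (M + 1)
  have hv₀ : 0 ≤ v := hv.1
  rw [neg_div, neg_nonpos]
  positivity

lemma min_le_of_monotoneOn_of_antitoneOn {f : ℝ → ℝ} {a m b x : ℝ}
    (hf₁ : MonotoneOn f (Set.Icc a m)) (hf₂ : AntitoneOn f (Set.Icc m b))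
    (hx : x ∈ Set.Icc a b) : min (f a) (f b) ≤ f x := by
  rcases le_total x m with hxm | hmx
  · exact min_le_of_left_le (hf₁ ⟨le_rfl, hx.1.trans hxm⟩ ⟨hx.1, hxm⟩ hx.1)
  · exact min_le_of_right_le (hf₂ ⟨hmx, hx.2⟩ ⟨hmx.trans hx.2, le_rfl⟩ hx.2)

lemma one_sub_pow_le_sqrt_one_sub_mul_invSqrtTaylor (M : ℕ) {u : ℝ} (hu : u ∈ Set.Icc 0 1) :
    1 - u ^ (M + 1) ≤ √(1 - u) * invSqrtTaylor M u := by
  set c := invSqrtCoeff (M + 1)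
  set H := fun v ↦ √(1 - v) * invSqrtTaylor M v + v ^ (M + 1)
  have hc := invSqrtCoeff_pos (M + 1)
  have hc₁ := invSqrtCoeff_le_one (M + 1)
  have hH : ContinuousOn H (Set.Icc 0 1) :=
    ((continuous_sqrt_one_sub_mul_invSqrtTaylor M).add (continuous_pow _)).continuousOn
  have hH' {v : ℝ} (hv : v < 1) :
      HasDerivAt H ((M + 1) * v ^ M * (1 - c / √(1 - v))) v := by
    refine ((hasDerivAt_sqrt_one_sub_mul_invSqrtTaylor M hv).add
      (hasDerivAt_pow (M + 1) v)).congr_deriv ?_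
    push_cast
    ring
  -- `H' ≥ 0` exactly where `c ≤ √(1 - v)`, i.e. up to `v = 1 - c ^ 2`; and `H 0 = H 1 = 1`.
  have hmono : MonotoneOn H (Set.Icc 0 (1 - c ^ 2)) := by
    refine monotoneOn_of_hasDerivWithinAt_nonneg (convex_Icc _ _)
      (hH.mono (Set.Icc_subset_Icc_right (by nlinarith)))
      (fun v hv ↦ (hH' ?_).hasDerivWithinAt) (fun v hv ↦ ?_)
    all_goals rw [interior_Icc] at hv
    · nlinarith [hv.2]
    · have hv₀ : 0 ≤ v := hv.1.le
      have hcv : c ≤ √(1 - v) := le_sqrt_of_sq_le (by linarith [hv.2])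
      exact mul_nonneg (by positivity) (sub_nonneg.2 (div_le_one_of_le₀ hcv (sqrt_nonneg _)))
  have hanti : AntitoneOn H (Set.Icc (1 - c ^ 2) 1) := by
    refine antitoneOn_of_hasDerivWithinAt_nonpos (convex_Icc _ _)
      (hH.mono (Set.Icc_subset_Icc_left (by nlinarith)))
      (fun v hv ↦ (hH' ?_).hasDerivWithinAt) (fun v hv ↦ ?_)
    all_goals rw [interior_Icc] at hv
    · exact hv.2
    · have hv₀ : 0 ≤ v := by nlinarith [hv.1]
      have hcv : √(1 - v) ≤ c := sqrt_le_iff.2 ⟨hc.le, by linarith [hv.1]⟩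
      exact mul_nonpos_of_nonneg_of_nonpos (by positivity)
        (sub_nonpos.2 ((one_le_div₀ (sqrt_pos.2 (by linarith [hv.2]))).2 hcv))
  have hmin := min_le_of_monotoneOn_of_antitoneOn hmono hanti hu
  simp [H, invSqrtTaylor_zero_right] at hmin
  linarith

noncomputable def arcsinTaylor (M : ℕ) (x : ℝ) : ℝ :=
  ∑ n ∈ range (M + 1), invSqrtCoeff n * x ^ (2 * n + 1) / (2 * n + 1)

lemma continuous_arcsinTaylor (M : ℕ) : Continuous (arcsinTaylor M) := by
  unfold arcsinTaylor
  fun_prop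

lemma arcsinTaylor_neg (M : ℕ) (x : ℝ) : arcsinTaylor M (-x) = -arcsinTaylor M x := by
  simp only [arcsinTaylor, ← sum_neg_distrib, Odd.neg_pow (odd_two_mul_add_one _)]
  refine sum_congr rfl fun n _ ↦ ?_
  ring

lemma hasDerivAt_arcsinTaylor (M : ℕ) (x : ℝ) :
    HasDerivAt (arcsinTaylor M) (invSqrtTaylor M (x ^ 2)) x := by
  unfold arcsinTaylor invSqrtTaylor
  refine (HasDerivAt.fun_sum fun n _ ↦
    ((hasDerivAt_pow (2 * n + 1) x).const_mul (invSqrtCoeff n)).div_const _).congr_deriv ?_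
  refine sum_congr rfl fun n _ ↦ ?_
  rw [Nat.add_sub_cancel, pow_mul]
  push_cast
  field_simp

lemma hasDerivAt_arcsin_sub_arcsinTaylor (M : ℕ) {t : ℝ} (ht : t ∈ Set.Ioo (-1) 1) :
    HasDerivAt (fun t ↦ arcsin t - arcsinTaylor M t)
      ((1 - √(1 - t ^ 2) * invSqrtTaylor M (t ^ 2)) / √(1 - t ^ 2)) t := by
  have hs : √(1 - t ^ 2) ≠ 0 := (sqrt_pos.2 (by nlinarith [ht.1, ht.2])).ne'
  refine ((hasDerivAt_arcsin ht.1.ne' ht.2.ne).sub (hasDerivAt_arcsinTaylor M t)).congr_deriv ?_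
  field_simp

lemma arcsin_sub_arcsinTaylor_nonneg (M : ℕ) {x : ℝ} (hx : x ∈ Set.Icc 0 1) :
    0 ≤ arcsin x - arcsinTaylor M x := by
  refine image_le_of_deriv_right_le_deriv_boundary (f' := 0) continuousOn_const
    (fun t _ ↦ (hasDerivAt_const t 0).hasDerivWithinAt) (by simp [arcsinTaylor])
    (continuous_arcsin.sub (continuous_arcsinTaylor M)).continuousOn
    (fun t ht ↦ (hasDerivAt_arcsin_sub_arcsinTaylor M ⟨by linarith [ht.1], ht.2⟩).hasDerivWithinAt)
    (fun t ht ↦ ?_) hx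
  have hG := sqrt_one_sub_mul_invSqrtTaylor_le_one M ⟨sq_nonneg t, by nlinarith [ht.1, ht.2]⟩
  exact div_nonneg (sub_nonneg.2 hG) (sqrt_nonneg _)

lemma arcsin_sub_arcsinTaylor_le (M : ℕ) {x : ℝ} (hx : x ∈ Set.Icc 0 1) :
    arcsin x - arcsinTaylor M x ≤ x ^ (2 * M + 2) * arcsin x := by
  have hIoo {t : ℝ} (ht : t ∈ Set.Ico 0 1) : t ∈ Set.Ioo (-1) 1 := ⟨by linarith [ht.1], ht.2⟩
  refine image_le_of_deriv_right_le_deriv_boundary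
    (continuous_arcsin.sub (continuous_arcsinTaylor M)).continuousOn
    (fun t ht ↦ (hasDerivAt_arcsin_sub_arcsinTaylor M (hIoo ht)).hasDerivWithinAt)
    (by simp [arcsinTaylor]) ((continuous_pow _).mul continuous_arcsin).continuousOn
    (fun t ht ↦ ((hasDerivAt_pow _ t).mul
      (hasDerivAt_arcsin (hIoo ht).1.ne' (hIoo ht).2.ne)).hasDerivWithinAt)
    (fun t ht ↦ ?_) hx
  have hG := one_sub_pow_le_sqrt_one_sub_mul_invSqrtTaylor M
    ⟨sq_nonneg t, by nlinarith [ht.1, ht.2]⟩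
  rw [← pow_mul, mul_add_one] at hG
  have ht₀ : 0 ≤ t := ht.1
  have hasin : 0 ≤ arcsin t := arcsin_nonneg.2 ht₀
  have hpow : 0 ≤ ((2 * M + 2 : ℕ) : ℝ) * t ^ (2 * M + 2 - 1) * arcsin t := by positivity
  have hderiv : (1 - √(1 - t ^ 2) * invSqrtTaylor M (t ^ 2)) / √(1 - t ^ 2) ≤
      t ^ (2 * M + 2) * (1 / √(1 - t ^ 2)) := by
    rw [mul_one_div]
    exact div_le_div_of_nonneg_right (by linarith) (sqrt_nonneg _)
  linarith

lemma arcsin_le_pi_div_two_mul {x : ℝ} (hx : 0 ≤ x) : arcsin x ≤ π / 2 * x := by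
  rcases le_total x 1 with hx₁ | hx₁
  · have := mul_le_sin (arcsin_nonneg.2 hx) (arcsin_le_pi_div_two x)
    rw [sin_arcsin (by linarith) hx₁, div_mul_eq_mul_div, div_le_iff₀ pi_pos] at this
    linarith
  · rw [arcsin_of_one_le hx₁]
    nlinarith [pi_pos]

lemma abs_arcsin_sub_arcsinTaylor_abs (M : ℕ) (x : ℝ) :
    |arcsin x - arcsinTaylor M x| = |arcsin (|x|) - arcsinTaylor M (|x|)| := by
  rcases abs_choice x with h | h <;> rw [h]
  rw [arcsin_neg, arcsinTaylor_neg, ← abs_neg]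
  ring_nf

/-- **Tail bound for the arcsine Taylor series.** -/
theorem arcsin_taylor_tail (x : ℝ) (hx : x ∈ Set.Icc (-1 : ℝ) 1) (M : ℕ) :
    |Real.arcsin x - ∑ n ∈ Finset.range (M + 1),
        (1 / 4 ^ n) * (Nat.choose (2 * n) n : ℝ) * x ^ (2 * n + 1) / (2 * n + 1)| ≤
      π / 2 * |x| ^ (2 * M + 3) := by
  have hsum : ∑ n ∈ range (M + 1),
      (1 / 4 ^ n) * (Nat.choose (2 * n) n : ℝ) * x ^ (2 * n + 1) / (2 * n + 1) =
      arcsinTaylor M x :=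
    sum_congr rfl fun n _ ↦ by rw [invSqrtCoeff, Nat.centralBinom_eq_two_mul_choose]; ring
  have habs : |x| ∈ Set.Icc 0 1 := ⟨abs_nonneg x, abs_le.2 hx⟩
  rw [hsum, abs_arcsin_sub_arcsinTaylor_abs,
    abs_of_nonneg (arcsin_sub_arcsinTaylor_nonneg M habs)]
  calc arcsin |x| - arcsinTaylor M |x|
      ≤ |x| ^ (2 * M + 2) * arcsin |x| := arcsin_sub_arcsinTaylor_le M habs
    _ ≤ |x| ^ (2 * M + 2) * (π / 2 * |x|) := by
      gcongr; exact arcsin_le_pi_div_two_mul (abs_nonneg x)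
    _ = π / 2 * |x| ^ (2 * M + 3) := by ring
end
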